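/- Let Z₁, …, Z_{n+1} be exchangeable real-valued random variables (nonconformity scores), almost surely distinct. Then P(Z_{n+1} ≤ Q) ≥ 1 − α, where Q is the ⌈(1−α)(n+1)⌉-th smallest value among Z₁, …, Z_n (with Q = +∞ if ⌈(1−α)(n+1)⌉ > n). -/

import Mathlib

open MeasureTheory ProbabilityTheory Finset
open scoped ENNReal NNReal

open Classical in
noncomputable def rankFn {m : ℕ} (j : Fin m) (v : Fin m → ℝ) : ℕ :=
  (Finset.univ.filter fun i => v i ≤ v j).card

lemma measurable_rankFn {m : ℕ} (j : Fin m) : Measurable (rankFn j) := by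
  classical
  unfold rankFn
  simp_rw [Finset.card_filter]
  apply Finset.measurable_sum
  intro i _
  exact Measurable.ite (measurableSet_le (measurable_pi_apply i) (measurable_pi_apply j))
    measurable_const measurable_const

lemma card_filter_comp_perm {β : Type*} [Fintype β] (e : Equiv.Perm β)
    (p : β → Prop) [DecidablePred p] [DecidablePred fun i => p (e i)] :
    (Finset.univ.filter fun i => p (e i)).card = (Finset.univ.filter p).card := by
  rw [← Fintype.card_subtype, ← Fintype.card_subtype]
  exact Fintype.card_congr (e.subtypeEquiv fun a => Iff.rfl)

lemma rankFn_lt_rankFn {m : ℕ} {v : Fin m → ℝ} {a b : Fin m} (h : v a < v b) :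
    rankFn a v < rankFn b v := by
  classical
  apply Finset.card_lt_card
  constructor
  · intro i hi
    simp only [rankFn, Finset.mem_filter, Finset.mem_univ, true_and] at hi ⊢
    exact hi.trans h.le
  · intro hsub
    have hb : b ∈ Finset.univ.filter fun i => v i ≤ v b := by simp
    have := hsub hb
    simp only [Finset.mem_filter, Finset.mem_univ, true_and] at this
    exact absurd this (not_le.mpr h)

lemma rankFn_injective {m : ℕ} {v : Fin m → ℝ} (hv : Function.Injective v) :
    Function.Injective fun j => rankFn j v := by
  intro a b hab
  by_contra hne
  rcases (hv.ne hne).lt_or_gt with h | h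
  · exact absurd hab (rankFn_lt_rankFn h).ne
  · exact absurd hab.symm (rankFn_lt_rankFn h).ne

lemma counting {m k : ℕ} {v : Fin m → ℝ} (hv : Function.Injective v)
    (hk1 : 1 ≤ k) (hkm : k ≤ m) :
    (Finset.univ.filter fun j => rankFn j v ≤ k).card = k := by
  classical
  have hinj := rankFn_injective hv
  have himg : Finset.univ.image (fun j => rankFn j v) = Finset.Icc 1 m := by
    apply Finset.eq_of_subset_of_card_le
    · intro x hx
      simp only [Finset.mem_image, Finset.mem_univ, true_and] at hx
      obtain ⟨j, rfl⟩ := hx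
      simp only [Finset.mem_Icc]
      constructor
      · have : j ∈ Finset.univ.filter fun i => v i ≤ v j := by simp
        exact Finset.card_pos.mpr ⟨j, this⟩
      · exact (Finset.card_filter_le _ _).trans (by simp)
    · rw [Finset.card_image_of_injective _ hinj]
      simp [Nat.card_Icc]
  have h2 : ((Finset.univ.filter fun j => rankFn j v ≤ k).image
      (fun j => rankFn j v)).card = (Finset.univ.filter fun j => rankFn j v ≤ k).card :=
    Finset.card_image_of_injective _ hinj
  rw [← h2]
  have h3 : (Finset.univ.filter fun j => rankFn j v ≤ k).image (fun j => rankFn j v)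
      = (Finset.univ.image (fun j => rankFn j v)).filter (· ≤ k) := by
    rw [Finset.filter_image]
  rw [h3, himg]
  have : (Finset.Icc 1 m).filter (· ≤ k) = Finset.Icc 1 k := by
    ext a
    simp only [Finset.mem_filter, Finset.mem_Icc]
    omega
  rw [this, Nat.card_Icc]
  omega

/-- The `k`-th smallest value (1-indexed) among `Z₁,…,Zₙ`, as an extended real,
taken to be `⊤` when `k > n`: the infimum of all `v` that dominate at least `k`
of the values. -/
noncomputable def kthSmallest {n : ℕ} (z : Fin n → ℝ) (k : ℕ) : EReal :=
  sInf {v : EReal | k ≤ (Finset.univ.filter (fun i : Fin n => (z i : EReal) ≤ v)).card}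

/-- Split conformal coverage guarantee: if `Z₁,…,Z_{n+1}` are exchangeable and
almost surely distinct, then `P(Z_{n+1} ≤ Q) ≥ 1 − α`, where `Q` is the
`⌈(1−α)(n+1)⌉`-th smallest value among `Z₁,…,Zₙ` (`+∞` if the index exceeds `n`). -/
theorem stmt_3 {Ω : Type*} [MeasurableSpace Ω] (μ : Measure Ω) [IsProbabilityMeasure μ]
    (n : ℕ) (Z : Fin (n + 1) → Ω → ℝ) (hZ : ∀ i, Measurable (Z i))
    (hexch : ∀ σ : Equiv.Perm (Fin (n + 1)),
      μ.map (fun ω => (fun i => Z (σ i) ω)) = μ.map (fun ω => (fun i => Z i ω)))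
    (hdist : ∀ i j, i ≠ j → μ {ω | Z i ω = Z j ω} = 0)
    (α : ℝ) (hα0 : 0 < α) (hα1 : α < 1) :
    1 - α ≤ (μ {ω | (Z (Fin.last n) ω : EReal) ≤
        kthSmallest (fun i : Fin n => Z i.castSucc ω) ⌈(1 - α) * (n + 1)⌉₊}).toReal := by
  classical
  set k := ⌈(1 - α) * (n + 1)⌉₊ with hkdef
  have hpos : (0:ℝ) < (1 - α) * (n + 1) := by
    apply mul_pos (by linarith)
    positivity
  have hk1 : 1 ≤ k := Nat.one_le_iff_ne_zero.mpr (by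
    have := Nat.ceil_pos.mpr hpos
    omega)
  have hkm : k ≤ n + 1 := by
    apply Nat.ceil_le.mpr
    push_cast
    nlinarith
  set vec : Ω → (Fin (n+1) → ℝ) := fun ω i => Z i ω with hvecdef
  have hvecm : Measurable vec := measurable_pi_lambda _ hZ
  set S : Fin (n+1) → Set (Fin (n+1) → ℝ) := fun j => {v | rankFn j v ≤ k} with hSdef
  have hSmeas : ∀ j, MeasurableSet (S j) := fun j =>
    (measurable_rankFn j) measurableSet_Iic
  set A : Fin (n+1) → Set Ω := fun j => vec ⁻¹' S j with hAdef
  have hAmeas : ∀ j, MeasurableSet (A j) := fun j => hvecm (hSmeas j)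
  -- exchangeability: all A j have the same measure
  have hexA : ∀ j, μ (A j) = μ (A (Fin.last n)) := by
    intro j
    set σ := Equiv.swap j (Fin.last n) with hσ
    have hperm : Measurable (fun v : Fin (n+1) → ℝ => fun i => v (σ i)) :=
      measurable_pi_lambda _ fun i => measurable_pi_apply _
    have hσl : σ (Fin.last n) = j := Equiv.swap_apply_right _ _
    have hcount : ∀ w : Fin (n+1) → ℝ,
        (Finset.univ.filter fun i => w (σ i) ≤ w j).card
          = (Finset.univ.filter fun i => w i ≤ w j).card :=
      fun w => card_filter_comp_perm σ (fun i => w i ≤ w j)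
    have hSeq : S j = (fun v : Fin (n+1) → ℝ => fun i => v (σ i)) ⁻¹' S (Fin.last n) := by
      ext v
      simp only [Set.mem_preimage, Set.mem_setOf_eq, hSdef, rankFn, hσl]
      rw [hcount v]
    have hcomp : Measurable (fun ω => (fun i => Z (σ i) ω)) :=
      measurable_pi_lambda _ fun i => hZ (σ i)
    calc μ (A j) = μ ((fun ω => (fun i => Z (σ i) ω)) ⁻¹' S (Fin.last n)) := by
          rw [hAdef]
          simp only []
          rw [hSeq]
          rfl
      _ = (μ.map (fun ω => (fun i => Z (σ i) ω))) (S (Fin.last n)) :=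
          (Measure.map_apply hcomp (hSmeas _)).symm
      _ = (μ.map vec) (S (Fin.last n)) := by rw [hexch σ]
      _ = μ (A (Fin.last n)) := Measure.map_apply hvecm (hSmeas _)
  -- a.s. injectivity
  have hDinj : ∀ᵐ ω ∂μ, Function.Injective (vec ω) := by
    have hD : ∀ᵐ ω ∂μ, ∀ i j : Fin (n+1), i ≠ j → Z i ω ≠ Z j ω := by
      rw [ae_all_iff]
      intro i
      rw [ae_all_iff]
      intro j
      rcases eq_or_ne i j with rfl | h
      · filter_upwards with ω h'
        exact absurd rfl h'
      · rw [ae_iff]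
        refine measure_mono_null ?_ (hdist i j h)
        intro ω hω
        simp only [Set.mem_setOf_eq] at hω ⊢
        push_neg at hω
        exact hω.2
    filter_upwards [hD] with ω h
    intro a b hab
    by_contra hne
    exact h a b hne hab
  -- the sum of measures equals k
  have hpt : ∀ᵐ ω ∂μ, ∑ j : Fin (n+1), Set.indicator (A j) (1 : Ω → ℝ≥0∞) ω
      = (k : ℝ≥0∞) := by
    filter_upwards [hDinj] with ω hω
    have heq : ∑ j : Fin (n+1), Set.indicator (A j) (1 : Ω → ℝ≥0∞) ω
        = ((Finset.univ.filter fun j : Fin (n+1) => rankFn j (vec ω) ≤ k).card : ℝ≥0∞) := by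
      rw [Finset.card_filter]
      push_cast
      apply Finset.sum_congr rfl
      intro j _
      by_cases h : rankFn j (vec ω) ≤ k
      · have hmem : ω ∈ A j := h
        simp [Set.indicator, hmem, h]
      · have hmem : ω ∉ A j := h
        simp [Set.indicator, hmem, h]
    rw [heq]
    norm_cast
    exact counting hω hk1 hkm
  have hsum : ∑ j : Fin (n+1), μ (A j) = (k : ℝ≥0∞) := by
    calc ∑ j : Fin (n+1), μ (A j)
        = ∑ j : Fin (n+1), ∫⁻ ω, Set.indicator (A j) (1 : Ω → ℝ≥0∞) ω ∂μ :=
          Finset.sum_congr rfl fun j _ => (lintegral_indicator_one (hAmeas j)).symm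
      _ = ∫⁻ ω, ∑ j : Fin (n+1), Set.indicator (A j) (1 : Ω → ℝ≥0∞) ω ∂μ :=
          (lintegral_finset_sum _ fun j _ => measurable_one.indicator (hAmeas j)).symm
      _ = ∫⁻ _, (k : ℝ≥0∞) ∂μ := lintegral_congr_ae hpt
      _ = (k : ℝ≥0∞) := by rw [lintegral_const, measure_univ, mul_one]
  have hconst : ∑ j : Fin (n+1), μ (A j) = ((n:ℝ≥0∞) + 1) * μ (A (Fin.last n)) := by
    calc ∑ j : Fin (n+1), μ (A j)
        = ∑ _j : Fin (n+1), μ (A (Fin.last n)) := Finset.sum_congr rfl fun j _ => hexA j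
      _ = ((n:ℝ≥0∞) + 1) * μ (A (Fin.last n)) := by
          rw [Finset.sum_const, Finset.card_univ, Fintype.card_fin, nsmul_eq_mul]
          push_cast
          ring
  have hlast : (k : ℝ≥0∞) ≤ ((n:ℝ≥0∞) + 1) * μ (A (Fin.last n)) := by
    rw [← hconst]
    exact hsum.ge
  -- the key inclusion
  have hAsub : A (Fin.last n) ⊆ {ω | (Z (Fin.last n) ω : EReal) ≤
      kthSmallest (fun i : Fin n => Z i.castSucc ω) k} := by
    intro ω hω
    have hωr : (Finset.univ.filter fun i : Fin (n+1) => Z i ω ≤ Z (Fin.last n) ω).card ≤ k := by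
      have : rankFn (Fin.last n) (vec ω) ≤ k := hω
      simpa [rankFn, hvecdef] using this
    simp only [Set.mem_setOf_eq, kthSmallest]
    apply le_sInf
    intro v hv
    simp only [Set.mem_setOf_eq] at hv
    by_contra hlt
    push_neg at hlt
    set F := Finset.univ.filter fun i : Fin (n+1) => Z i ω ≤ Z (Fin.last n) ω with hF
    have hGF : (Finset.univ.filter fun i : Fin n =>
        ((Z i.castSucc ω : ℝ) : EReal) ≤ v).card ≤ (F.erase (Fin.last n)).card := by
      apply Finset.card_le_card_of_injOn (fun i => i.castSucc)
      · intro i hi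
        simp only [Finset.mem_coe, Finset.mem_filter, Finset.mem_univ, true_and] at hi
        have hlt' : (Z i.castSucc ω : EReal) < (Z (Fin.last n) ω : EReal) :=
          lt_of_le_of_lt hi hlt
        rw [EReal.coe_lt_coe_iff] at hlt'
        refine Finset.mem_erase.mpr ⟨(Fin.castSucc_lt_last i).ne, ?_⟩
        simp [hF, hlt'.le]
      · exact fun a _ b _ h => Fin.castSucc_injective n h
    have hlastF : Fin.last n ∈ F := by simp [hF]
    have hcerase : (F.erase (Fin.last n)).card = F.card - 1 :=
      Finset.card_erase_of_mem hlastF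
    have h1F : 1 ≤ F.card := Finset.card_pos.mpr ⟨_, hlastF⟩
    omega
  have hμT : (k : ℝ≥0∞) / ((n:ℝ≥0∞) + 1) ≤ μ {ω | (Z (Fin.last n) ω : EReal) ≤
      kthSmallest (fun i : Fin n => Z i.castSucc ω) k} := by
    refine le_trans ?_ (measure_mono hAsub)
    rw [ENNReal.div_le_iff_le_mul (Or.inl (by norm_num)) (Or.inl (by simp))]
    rw [mul_comm]
    exact hlast
  have htr := ENNReal.toReal_mono (measure_ne_top μ _) hμT
  refine le_trans ?_ htr
  rw [ENNReal.toReal_div]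
  simp only [ENNReal.toReal_natCast]
  have h1 : (((n:ℝ≥0∞) + 1)).toReal = (n:ℝ) + 1 := by
    rw [ENNReal.toReal_add (by simp) (by simp)]
    simp
  rw [h1]
  rw [le_div_iff₀ (by positivity)]
  have hceil : (1 - α) * (n + 1) ≤ (k : ℝ) := Nat.le_ceil _
  nlinarith
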